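/- (Correctness of Algorithm 1.) Let Y be a discrete random variable and S a finite set of discrete random variables with Y ∉ S. If M ⊆ S is a Markov blanket of Y within S and for every X ∈ M, Y is not conditionally independent of X given M \ {X}, then M is a Markov boundary of Y within S. -/

import Mathlib

/-!
If a proper subset `M' ⊂ M` were a Markov blanket, pick `X ∈ M \ M'`. By decomposition,
`Y ⊥ S \ M' | M'` yields `Y ⊥ {X} ∪ (M \ {X} \ M') | M'`, and weak union moves
`M \ {X} \ M'` into the conditioning set, giving `Y ⊥ X | M \ {X}`: a contradiction.
Both semi-graphoid rules hold for the pmf-level definition by summing out variables.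
-/

open scoped BigOperators

noncomputable section

/-- `p` is a probability mass function on the finite type `Ω`. -/
def IsDist {Ω : Type*} [Fintype Ω] (p : Ω → ℝ) : Prop :=
  (∀ w, 0 ≤ p w) ∧ ∑ w, p w = 1

/-- Total variation distance between two distributions on the same finite type. -/
def tvDist {Ω : Type*} [Fintype Ω] (p q : Ω → ℝ) : ℝ :=
  (∑ w, |p w - q w|) / 2

variable {ι : Type*} [Fintype ι] [DecidableEq ι]
variable {α : ι → Type*} [∀ i, Fintype (α i)] [∀ i, DecidableEq (α i)]

/-- Marginal probability, under joint pmf `p`, of the event that the variables in the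
collection `A` take the values prescribed by the configuration `x`. -/
def margProb (p : (∀ i, α i) → ℝ) (A : Finset ι) (x : ∀ i, α i) : ℝ :=
  ∑ w : ∀ i, α i, if ∀ i ∈ A, w i = x i then p w else 0

/-- Conditional independence of the collections `A` and `B` given the collection `C`:
`f(a, b | c) = f(a | c) f(b | c)` whenever `f(c) > 0` (stated in multiplied-out form). -/
def CondIndep (p : (∀ i, α i) → ℝ) (A B C : Finset ι) : Prop :=
  ∀ x : ∀ i, α i, 0 < margProb p C x →
    margProb p (A ∪ B ∪ C) x * margProb p C x =
      margProb p (A ∪ C) x * margProb p (B ∪ C) x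

/-- `M` is a Markov blanket of the variable `y` within the collection `T`. -/
def MarkovBlanket (p : (∀ i, α i) → ℝ) (y : ι) (T M : Finset ι) : Prop :=
  M ⊆ T ∧ CondIndep p {y} (T \ M) M

/-- `M` is a Markov boundary of `y` within `T`: a Markov blanket no proper subset of
which is a Markov blanket. -/
def MarkovBoundary (p : (∀ i, α i) → ℝ) (y : ι) (T M : Finset ι) : Prop :=
  MarkovBlanket p y T M ∧ ∀ M' ⊂ M, ¬ MarkovBlanket p y T M'

/-- Mutual information between the collections `A` and `B`
(with the convention `0 · log(junk) = 0` on zero-probability terms). -/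
def MI (p : (∀ i, α i) → ℝ) (A B : Finset ι) : ℝ :=
  ∑ w : ∀ i, α i, p w *
    Real.log (margProb p (A ∪ B) w / (margProb p A w * margProb p B w))

/-- Conditional mutual information between collections `A` and `B` given `C`
(with the convention `0 · log(junk) = 0` on zero-probability terms). -/
def CMI (p : (∀ i, α i) → ℝ) (A B C : Finset ι) : ℝ :=
  ∑ w : (∀ i, α i), p w *
    Real.log ((margProb p (A ∪ B ∪ C) w * margProb p C w) /
      (margProb p (A ∪ C) w * margProb p (B ∪ C) w))

lemma margProb_congr (p : (∀ i, α i) → ℝ) (A : Finset ι) {x x' : ∀ i, α i}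
    (h : ∀ i ∈ A, x i = x' i) : margProb p A x = margProb p A x' := by
  unfold margProb
  refine Finset.sum_congr rfl fun w _ => if_congr ?_ rfl rfl
  exact forall₂_congr fun i hi => by rw [h i hi]

lemma margProb_anti (p : (∀ i, α i) → ℝ) (hp : ∀ w, 0 ≤ p w) {A B : Finset ι}
    (h : A ⊆ B) (x : ∀ i, α i) : margProb p B x ≤ margProb p A x := by
  refine Finset.sum_le_sum fun w _ => ?_
  by_cases hB : ∀ i ∈ B, w i = x i
  · rw [if_pos hB, if_pos fun i hi => hB i (h hi)]
  · rw [if_neg hB]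
    split_ifs
    exacts [hp w, le_rfl]

-- Summing out the variables of `E`: each configuration `w` is counted once, through the
-- unique `u` that copies `w` on `E` and `x` off `E`.
lemma margProb_eq_sum_margProb_union (p : (∀ i, α i) → ℝ) {A E : Finset ι}
    (hAE : Disjoint A E) (x : ∀ i, α i) :
    margProb p A x =
      ∑ u : ∀ i, α i, if ∀ i ∉ E, u i = x i then margProb p (A ∪ E) u else 0 := by
  have hcount : ∀ w : ∀ i, α i,
      (if ∀ i ∈ A, w i = x i then p w else 0) =
        ∑ u : ∀ i, α i,
          if (∀ i ∉ E, u i = x i) ∧ ∀ i ∈ A ∪ E, w i = u i then p w else 0 := by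
    intro w
    set u₀ : ∀ i, α i := fun i => if i ∈ E then w i else x i
    have hunique : ∀ u : ∀ i, α i,
        ((∀ i ∉ E, u i = x i) ∧ ∀ i ∈ A ∪ E, w i = u i) ↔
          u = u₀ ∧ ∀ i ∈ A, w i = x i := by
      intro u
      constructor
      · rintro ⟨hoff, hon⟩
        refine ⟨funext fun i => ?_, fun i hi => ?_⟩
        · by_cases hi : i ∈ E
          · simp [u₀, hi, hon i (Finset.mem_union_right A hi)]
          · simp [u₀, hi, hoff i hi]
        · rw [hon i (Finset.mem_union_left E hi)]
          exact hoff i (Finset.disjoint_left.mp hAE hi)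
      · rintro ⟨rfl, hA⟩
        refine ⟨fun i hi => by simp [u₀, hi], fun i hi => ?_⟩
        by_cases hiE : i ∈ E
        · simp [u₀, hiE]
        · simp [u₀, hiE, hA i ((Finset.mem_union.mp hi).resolve_right hiE)]
    simp_rw [hunique, ite_and, Finset.sum_ite_eq', Finset.mem_univ, if_true]
  unfold margProb
  simp_rw [hcount, ite_and, Finset.ite_sum_zero]
  exact Finset.sum_comm

theorem CondIndep.of_subset_right {p : (∀ i, α i) → ℝ} {A B B' C : Finset ι}
    (h : CondIndep p A B C) (hB' : B' ⊆ B) (hdisj : Disjoint (A ∪ C) (B \ B')) :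
    CondIndep p A B' C := by
  have hunion : A ∪ B' ∪ C ∪ (B \ B') = A ∪ B ∪ C := by
    ext i
    have := @hB' i
    simp only [Finset.mem_union, Finset.mem_sdiff]
    tauto
  have hunion' : B' ∪ C ∪ (B \ B') = B ∪ C := by
    ext i
    have := @hB' i
    simp only [Finset.mem_union, Finset.mem_sdiff]
    tauto
  obtain ⟨hAE, hCE⟩ := Finset.disjoint_union_left.mp hdisj
  have hdisjB'C : Disjoint (B' ∪ C) (B \ B') :=
    Finset.disjoint_union_left.mpr ⟨Finset.disjoint_sdiff, hCE⟩
  have hdisjAB'C : Disjoint (A ∪ B' ∪ C) (B \ B') := by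
    rw [Finset.union_assoc]
    exact Finset.disjoint_union_left.mpr ⟨hAE, hdisjB'C⟩
  intro x hx
  rw [margProb_eq_sum_margProb_union p hdisjAB'C x, margProb_eq_sum_margProb_union p hdisjB'C x,
    hunion, hunion', Finset.sum_mul, Finset.mul_sum]
  refine Finset.sum_congr rfl fun u _ => ?_
  split_ifs with hu
  · have hfix : ∀ D : Finset ι, Disjoint D (B \ B') → margProb p D u = margProb p D x :=
      fun D hD => margProb_congr p D fun i hi => hu i (Finset.disjoint_left.mp hD hi)
    rw [← hfix C hCE, ← hfix (A ∪ C) hdisj]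
    exact h u (by rwa [hfix C hCE])
  · simp

theorem CondIndep.weak_union {p : (∀ i, α i) → ℝ} (hp : ∀ w, 0 ≤ p w) {A B C D : Finset ι}
    (h : CondIndep p A (B ∪ D) C) (hdisj : Disjoint (A ∪ C) (B \ D)) :
    CondIndep p A B (D ∪ C) := by
  have hD : CondIndep p A D C :=
    h.of_subset_right Finset.subset_union_right (by rwa [Finset.union_sdiff_right])
  intro x hx
  have hC : 0 < margProb p C x :=
    hx.trans_le (margProb_anti p hp Finset.subset_union_right x)
  have hBD := h x hC
  have hD' := hD x hC
  simp only [← Finset.union_assoc] at hBD hD' ⊢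
  apply mul_right_cancel₀ hC.ne'
  linear_combination margProb p (D ∪ C) x * hBD - margProb p (B ∪ D ∪ C) x * hD'

variable [∀ i, Nonempty (α i)]

/-- correctness of Algorithm 1: a Markov blanket `M` of `Y` within `S`
such that no variable `X ∈ M` is conditionally independent of `Y` given `M \ {X}` is a
Markov boundary of `Y` within `S`. -/
theorem blanket_with_no_redundant_variable_is_boundary
    (p : (∀ i, α i) → ℝ) (hp : IsDist p)
    (y : ι) (S : Finset ι) (hyS : y ∉ S)
    (M : Finset ι) (hbl : MarkovBlanket p y S M)
    (hmin : ∀ X ∈ M, ¬ CondIndep p {y} {X} (M.erase X)) :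
    MarkovBoundary p y S M := by
  refine ⟨hbl, fun M' hM'M hbl' => ?_⟩
  obtain ⟨X, hXM, hXM'⟩ := Finset.exists_of_ssubset hM'M
  have hM'X : M' ⊆ M.erase X := fun i hi =>
    Finset.mem_erase.mpr ⟨ne_of_mem_of_not_mem hi hXM', hM'M.subset hi⟩
  have hsub : {X} ∪ (M.erase X \ M') ⊆ S \ M' :=
    Finset.union_subset (Finset.singleton_subset_iff.mpr (Finset.mem_sdiff.mpr ⟨hbl.1 hXM, hXM'⟩))
      (Finset.sdiff_subset_sdiff ((M.erase_subset X).trans hbl.1) le_rfl)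
  have hdisj : Disjoint ({y} ∪ M') (S \ M') :=
    Finset.disjoint_union_left.mpr ⟨Finset.disjoint_singleton_left.mpr fun hy =>
      hyS (Finset.mem_sdiff.mp hy).1, Finset.disjoint_sdiff⟩
  have hdecomp : CondIndep p {y} ({X} ∪ (M.erase X \ M')) M' :=
    hbl'.2.of_subset_right hsub (Finset.disjoint_of_subset_right Finset.sdiff_subset hdisj)
  have hweak := hdecomp.weak_union hp.1 (Finset.disjoint_of_subset_right
    (Finset.sdiff_subset.trans (Finset.subset_union_left.trans hsub)) hdisj)
  rw [Finset.sdiff_union_of_subset hM'X] at hweak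
  exact hmin X hXM hweak

end
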